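/- arXiv:1210.4102 — 2 statements merged into one kernel-verified Lean document; each statement's English description precedes it below -/
import Mathlib

section
/- The two-sided circle action on SU(3) defined by z · A = diag(z^{k₁}, z^{k₂}, z^{k₃}) · A · diag(z^{l₁}, z^{l₂}, z^{l₃})^{-1}, where k, l ∈ ℤ³ satisfy k₁+k₂+k₃ = l₁+l₂+l₃, is free if and only if gcd(k₁ − l_i, k₂ − l_j) = 1 for all i ≠ j with i, j ∈ {1,2,3} (and similarly for all pairs of distinct rows of k versus l). -/
/-!
STATEMENT 7: the two-sided circle action on `SU(3)`,
`z · A = diag(z^{k₁},z^{k₂},z^{k₃}) A diag(z^{l₁},z^{l₂},z^{l₃})⁻¹`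
(where `∑ kᵢ = ∑ lᵢ`), is free iff `gcd(k_a − l_i, k_b − l_j) = 1` for all
distinct `a, b` and all distinct `i, j` in `{1,2,3}`.
-/

private lemma aux_zpow_gcd {z : ℂ} (hz : z ≠ 0) {m n : ℤ}
    (h : Int.gcd m n = 1) (hm : z ^ m = 1) (hn : z ^ n = 1) : z = 1 := by
  have hb := Int.gcd_eq_gcd_ab m n
  rw [h] at hb
  have hb' : (1 : ℤ) = m * Int.gcdA m n + n * Int.gcdB m n := by exact_mod_cast hb
  calc z = z ^ (1 : ℤ) := (zpow_one z).symm
    _ = z ^ (m * Int.gcdA m n + n * Int.gcdB m n) := by rw [← hb']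
    _ = (z ^ m) ^ Int.gcdA m n * (z ^ n) ^ Int.gcdB m n := by
        rw [zpow_add₀ hz, zpow_mul, zpow_mul]
    _ = 1 := by rw [hm, hn, one_zpow, one_zpow, one_mul]

private lemma aux_exists_circle {m n : ℤ} (h : Int.gcd m n ≠ 1) :
    ∃ z : Circle, z ≠ 1 ∧ (z : ℂ) ^ m = 1 ∧ (z : ℂ) ^ n = 1 := by
  rcases Nat.eq_zero_or_pos (Int.gcd m n) with h0 | hpos
  · obtain ⟨hm, hn⟩ := Int.gcd_eq_zero_iff.mp h0
    refine ⟨⟨-1, mem_sphere_zero_iff_norm.mpr (by norm_num)⟩, ?_, by simp [hm], by simp [hn]⟩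
    intro hcontra
    have : ((-1 : ℂ)) = 1 := congrArg (fun z : Circle => (z : ℂ)) hcontra
    norm_num at this
  · set d := Int.gcd m n with hd
    have hd2 : 2 ≤ d := by omega
    have hdR : (d : ℝ) ≠ 0 := by positivity
    have hdC : (d : ℂ) ≠ 0 := by exact_mod_cast hdR
    refine ⟨Circle.exp (2 * Real.pi / d), ?_, ?_, ?_⟩
    · intro hcontra
      obtain ⟨nn, hnn⟩ := Circle.exp_eq_one.mp hcontra
      have hπ : (2 * Real.pi) ≠ 0 := by positivity
      have h1 : (nn : ℝ) * d = 1 := by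
        field_simp at hnn
        nlinarith [Real.pi_pos]
      have h2 : (nn * (d : ℤ) : ℤ) = 1 := by exact_mod_cast h1
      have hdvd : (d : ℤ) ∣ 1 := Dvd.intro_left nn h2
      have := Int.le_of_dvd one_pos hdvd
      omega
    · obtain ⟨m', hm'⟩ : (d : ℤ) ∣ m := Int.gcd_dvd_left m n
      rw [Circle.coe_exp, ← Complex.exp_int_mul]
      rw [show (m : ℂ) * ((2 * Real.pi / d : ℝ) * Complex.I) = m' * (2 * Real.pi * Complex.I) by
        push_cast [hm']; field_simp]
      exact Complex.exp_int_mul_two_pi_mul_I m'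
    · obtain ⟨n', hn'⟩ : (d : ℤ) ∣ n := Int.gcd_dvd_right m n
      rw [Circle.coe_exp, ← Complex.exp_int_mul]
      rw [show (n : ℂ) * ((2 * Real.pi / d : ℝ) * Complex.I) = n' * (2 * Real.pi * Complex.I) by
        push_cast [hn']; field_simp]
      exact Complex.exp_int_mul_two_pi_mul_I n'

private lemma aux_su3_mem (σ : Equiv.Perm (Fin 3)) (a : Fin 3) :
    (Matrix.of fun p q =>
        if q = σ p then (if p = a then ((Equiv.Perm.sign σ : ℤ) : ℂ) else 1) else 0)
      ∈ Matrix.specialUnitaryGroup (Fin 3) ℂ := by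
  set s : ℂ := ((Equiv.Perm.sign σ : ℤ) : ℂ) with hs
  have hs2 : s * s = 1 := by
    rw [hs, ← Int.cast_mul, ← Units.val_mul, Int.units_mul_self]; norm_num
  have hss : star s = s := by rw [hs]; simp
  set d : Fin 3 → ℂ := fun p => if p = a then s else 1 with hdd
  rw [Matrix.mem_specialUnitaryGroup_iff]
  constructor
  · rw [Matrix.mem_unitaryGroup_iff]
    ext p q
    rw [Matrix.mul_apply]
    simp only [Matrix.star_apply, Matrix.of_apply, apply_ite star, star_zero, mul_ite, ite_mul,
      mul_zero, zero_mul, Matrix.one_apply]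
    by_cases hpq : p = q
    · subst hpq
      rw [Finset.sum_eq_single (σ p)]
      · simp only [if_pos rfl]
        by_cases hpa : p = a <;> simp [hpa, hss, hs2]
      · intro r _ hr
        by_cases hh : r = σ p
        · exact absurd hh hr
        · simp [hh]
      · intro hmem; exact absurd (Finset.mem_univ _) hmem
    · rw [Finset.sum_eq_zero]
      · simp [hpq]
      · intro r _
        have hqp : q ≠ p := fun h => hpq h.symm
        by_cases h1 : r = σ p <;> by_cases h2 : r = σ q
        · exact absurd (σ.injective (h1.symm.trans h2)) hpq
        · simp [h1, h2, hqp, hpq]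
        · simp [h1, h2, hqp, hpq]
        · simp [h1, h2]
  · have hA : (Matrix.of fun p q => if q = σ p then (if p = a then s else 1) else 0)
        = Matrix.diagonal d * σ.permMatrix ℂ := by
      ext p q
      simp [Matrix.diagonal_mul, Equiv.Perm.permMatrix, PEquiv.toMatrix_apply,
        Equiv.toPEquiv_apply, mul_ite, eq_comm, hdd]
    rw [hA, Matrix.det_mul, Matrix.det_diagonal, Matrix.det_permutation]
    have hprod : (∏ i, d i) = s := by rw [hdd]; simp [Finset.prod_ite_eq']
    rw [hprod, ← hs]
    exact hs2

private lemma aux_perm : ∀ a b i j : Fin 3, a ≠ b → i ≠ j →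
    ∃ σ : Equiv.Perm (Fin 3), σ a = i ∧ σ b = j := by decide

private lemma aux_third (m : Fin 3 → ℤ) (a b p : Fin 3) (hab : a ≠ b)
    (h0 : m 0 + m 1 + m 2 = 0) : m p = -(m a) - m b ∨ p = a ∨ p = b := by
  fin_cases p <;> fin_cases a <;> fin_cases b <;> simp_all <;> omega

theorem eschenburg_action_free_iff (k l : Fin 3 → ℤ)
    (hsum : k 0 + k 1 + k 2 = l 0 + l 1 + l 2) :
    (∀ (z : Circle) (A : Matrix (Fin 3) (Fin 3) ℂ),
        A ∈ Matrix.specialUnitaryGroup (Fin 3) ℂ →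
        Matrix.diagonal (fun i => (z : ℂ) ^ (k i)) * A *
          (Matrix.diagonal fun i => (z : ℂ) ^ (l i))⁻¹ = A → z = 1)
    ↔ (∀ a b i j : Fin 3, a ≠ b → i ≠ j →
        Int.gcd (k a - l i) (k b - l j) = 1) := by
  constructor
  · -- freeness → gcd condition
    intro hfree a b i j hab hij
    by_contra hg
    obtain ⟨σ, hσa, hσb⟩ := aux_perm a b i j hab hij
    obtain ⟨z, hz1, hzm, hzn⟩ := aux_exists_circle hg
    have hzc : (z : ℂ) ≠ 0 := z.coe_ne_zero
    have hsum0 : (k 0 - l (σ 0)) + (k 1 - l (σ 1)) + (k 2 - l (σ 2)) = 0 := by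
      have h3 : l (σ 0) + l (σ 1) + l (σ 2) = l 0 + l 1 + l 2 := by
        have := Equiv.sum_comp σ l
        simpa [Fin.sum_univ_three] using this
      omega
    have hall : ∀ p, (z : ℂ) ^ (k p - l (σ p)) = 1 := by
      intro p
      rcases aux_third (fun p => k p - l (σ p)) a b p hab hsum0 with hk | rfl | rfl
      · simp only [hσa, hσb] at hk
        rw [hk, zpow_sub₀ hzc, zpow_neg, hzm, hzn]
        norm_num
      · rw [hσa]; exact hzm
      · rw [hσb]; exact hzn
    have hzk : ∀ p, (z : ℂ) ^ (k p) = (z : ℂ) ^ (l (σ p)) := by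
      intro p
      have := hall p
      rwa [zpow_sub₀ hzc, div_eq_one_iff_eq (zpow_ne_zero _ hzc)] at this
    set A : Matrix (Fin 3) (Fin 3) ℂ :=
      Matrix.of fun p q =>
        if q = σ p then (if p = a then ((Equiv.Perm.sign σ : ℤ) : ℂ) else 1) else 0 with hA
    have hdetl : IsUnit (Matrix.diagonal fun i => (z : ℂ) ^ (l i)).det := by
      rw [Matrix.det_diagonal]
      exact isUnit_iff_ne_zero.mpr (Finset.prod_ne_zero_iff.mpr fun i _ => zpow_ne_zero _ hzc)
    have hE : Matrix.diagonal (fun i => (z : ℂ) ^ (k i)) * A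
        = A * Matrix.diagonal (fun i => (z : ℂ) ^ (l i)) := by
      ext p q
      rw [Matrix.diagonal_mul, Matrix.mul_diagonal]
      by_cases h : q = σ p
      · subst h
        rw [hzk p]; ring
      · simp [hA, h]
    have hfix : Matrix.diagonal (fun i => (z : ℂ) ^ (k i)) * A *
        (Matrix.diagonal fun i => (z : ℂ) ^ (l i))⁻¹ = A := by
      rw [hE, Matrix.mul_nonsing_inv_cancel_right _ _ hdetl]
    exact hz1 (hfree z A (aux_su3_mem σ a) hfix)
  · -- gcd condition → freeness
    intro hgcd z A hA hfix
    have hzc : (z : ℂ) ≠ 0 := z.coe_ne_zero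
    have hdetl : IsUnit (Matrix.diagonal fun i => (z : ℂ) ^ (l i)).det := by
      rw [Matrix.det_diagonal]
      exact isUnit_iff_ne_zero.mpr (Finset.prod_ne_zero_iff.mpr fun i _ => zpow_ne_zero _ hzc)
    have hE : Matrix.diagonal (fun i => (z : ℂ) ^ (k i)) * A
        = A * Matrix.diagonal (fun i => (z : ℂ) ^ (l i)) := by
      have h1 := congrArg (fun M => M * Matrix.diagonal fun i => (z : ℂ) ^ (l i)) hfix
      simpa only [Matrix.nonsing_inv_mul_cancel_right _ _ hdetl] using h1
    have hent : ∀ p q, (z : ℂ) ^ (k p) * A p q = A p q * (z : ℂ) ^ (l q) := by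
      intro p q
      have := congrFun (congrFun hE p) q
      simpa [Matrix.diagonal_mul, Matrix.mul_diagonal] using this
    have hdet : A.det = 1 := (Matrix.mem_specialUnitaryGroup_iff.mp hA).2
    obtain ⟨σ, hσ⟩ : ∃ σ : Equiv.Perm (Fin 3), ∀ p, A (σ p) p ≠ 0 := by
      by_contra hc
      push_neg at hc
      have hz : A.det = 0 := by
        rw [Matrix.det_apply]
        refine Finset.sum_eq_zero fun σ _ => ?_
        obtain ⟨p, hp⟩ := hc σ
        have hz0 : (∏ i, A (σ i) i) = 0 := Finset.prod_eq_zero (Finset.mem_univ p) hp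
        rw [hz0, smul_zero]
      rw [hdet] at hz
      exact one_ne_zero hz
    have hone : ∀ p, (z : ℂ) ^ (k (σ p) - l p) = 1 := by
      intro p
      have h1 := hent (σ p) p
      rw [mul_comm ((z : ℂ) ^ (k (σ p)))] at h1
      have h2 := mul_left_cancel₀ (hσ p) h1
      rw [zpow_sub₀ hzc, h2.symm, div_self (zpow_ne_zero _ hzc)]
    have hgcd01 : Int.gcd (k (σ 0) - l 0) (k (σ 1) - l 1) = 1 :=
      hgcd (σ 0) (σ 1) 0 1 (fun h => (by decide : (0 : Fin 3) ≠ 1) (σ.injective h)) (by decide)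
    exact Circle.ext (aux_zpow_gcd hzc hgcd01 (hone 0) (hone 1))
end

section
/- Fix coprime integers p,q with p ≥ q ≥ 0 and p+q > 0. The quotient of U(2) by the central-like subgroup {diag(z^p, z^q) : z^{p+q} = 1} arising in the Aloff–Wallach fibration equals the quotient of SU(2) by the cyclic group of order p+q generated by diag(ζ^p, ζ^q) with ζ = e^{2πi/(p+q)}; in particular the fiber U(2)/{diag(z^p,z^q) : z^{p+q}=1} is a lens space S³/ℤ_{p+q}. -/
/-!
STATEMENT 18: fix coprime integers `p ≥ q ≥ 0` with `p + q > 0`. The subgroup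
`Γ = {diag(z^p, z^q) : z^{p+q} = 1}` of `U(2)` arising in the Aloff–Wallach
fibration is contained in `SU(2)`; it equals the cyclic group of order `p+q`
generated by `diag(ζ^p, ζ^q)` with `ζ = e^{2πi/(p+q)}`, and it acts freely on
`SU(2)` by left translation; hence the fiber `U(2)/Γ = SU(2)/Γ` is the lens
space `S³/ℤ_{p+q}`.
-/

open Matrix Complex

/-- `Γ = {diag(z^p, z^q) : z^{p+q} = 1}`. -/
def awGamma (p q : ℕ) : Set (Matrix (Fin 2) (Fin 2) ℂ) :=
  {M | ∃ z : ℂ, z ^ (p + q) = 1 ∧ M = Matrix.diagonal ![z ^ p, z ^ q]}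

/-- The generator `diag(ζ^p, ζ^q)`, `ζ = e^{2πi/(p+q)}`. -/
noncomputable def awGen (p q : ℕ) : Matrix (Fin 2) (Fin 2) ℂ :=
  Matrix.diagonal ![Complex.exp (2 * Real.pi * Complex.I / (p + q)) ^ p,
    Complex.exp (2 * Real.pi * Complex.I / (p + q)) ^ q]

private lemma aw_diag_pow (a b : ℂ) (m : ℕ) :
    (Matrix.diagonal ![a, b]) ^ m = Matrix.diagonal ![a ^ m, b ^ m] := by
  rw [Matrix.diagonal_pow]
  have : (![a, b] ^ m) = ![a ^ m, b ^ m] := by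
    funext i; fin_cases i <;> simp [Pi.pow_apply]
  rw [this]

private lemma aw_diag_one : (Matrix.diagonal ![(1 : ℂ), 1]) = 1 := by
  have : (![(1:ℂ), 1]) = (1 : Fin 2 → ℂ) := by funext i; fin_cases i <;> simp
  rw [this]; exact Matrix.diagonal_one

theorem aloff_wallach_fiber_lens_space (p q : ℕ) (hpq : q ≤ p)
    (hpos : 0 < p + q) (hcop : Nat.Coprime p q) :
    -- `Γ ⊂ SU(2)`:
    (∀ M ∈ awGamma p q, M ∈ Matrix.specialUnitaryGroup (Fin 2) ℂ) ∧
    -- `Γ` is the cyclic group generated by `diag(ζ^p, ζ^q)` …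
    awGamma p q = {M | ∃ m : ℕ, M = awGen p q ^ m} ∧
    -- … of order `p + q`:
    Nat.card (awGamma p q) = p + q ∧
    -- `Γ` acts freely on `SU(2)` by left translation:
    (∀ M ∈ awGamma p q, ∀ A ∈ Matrix.specialUnitaryGroup (Fin 2) ℂ,
      M * A = A → M = 1) := by
  set n := p + q with hn
  haveI : NeZero n := ⟨hpos.ne'⟩
  have hcast : ((n : ℕ) : ℂ) = (p : ℂ) + (q : ℂ) := by push_cast [hn]; ring
  set ζ : ℂ := Complex.exp (2 * Real.pi * Complex.I / n) with hζdef
  have hζeq : ζ = Complex.exp (2 * Real.pi * Complex.I / ((p : ℂ) + (q : ℂ))) := by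
    rw [hζdef, hcast]
  have hprim : IsPrimitiveRoot ζ n := Complex.isPrimitiveRoot_exp n hpos.ne'
  have hord : orderOf ζ = n := hprim.eq_orderOf.symm
  have hζn : ζ ^ n = 1 := hprim.pow_eq_one
  have hgen : ∀ m : ℕ, awGen p q ^ m = Matrix.diagonal ![(ζ ^ m) ^ p, (ζ ^ m) ^ q] := by
    intro m
    rw [awGen, aw_diag_pow, ← hζeq]
    rw [← pow_mul, ← pow_mul, mul_comm p m, mul_comm q m, pow_mul, pow_mul]
  -- Part 1
  have part1 : ∀ M ∈ awGamma p q, M ∈ Matrix.specialUnitaryGroup (Fin 2) ℂ := by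
    rintro M ⟨z, hz, rfl⟩
    have habs : ‖z‖ = 1 := by
      have hpow : ‖z‖ ^ n = 1 := by
        have := congrArg (‖·‖) hz
        simpa [map_pow] using this
      rcases lt_trichotomy ‖z‖ 1 with h | h | h
      · have := pow_lt_one₀ (norm_nonneg z) h (NeZero.ne n); linarith
      · exact h
      · have := one_lt_pow₀ h (NeZero.ne n); linarith
    have hzu : star z * z = 1 := by
      rw [Complex.star_def, mul_comm, Complex.mul_conj, Complex.normSq_eq_norm_sq, habs]; norm_num
    have hk : ∀ k : ℕ, star (z ^ k) * z ^ k = 1 := by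
      intro k
      rw [star_pow, ← mul_pow, hzu, one_pow]
    refine Matrix.mem_specialUnitaryGroup_iff.mpr ⟨?_, ?_⟩
    · rw [Matrix.mem_unitaryGroup_iff']
      have hsv : star ![z ^ p, z ^ q] = ![star (z ^ p), star (z ^ q)] := by
        funext i; fin_cases i <;> simp
      rw [Matrix.star_eq_conjTranspose, Matrix.diagonal_conjTranspose, hsv,
        Matrix.diagonal_mul_diagonal]
      have hvv : (fun i => ![star (z ^ p), star (z ^ q)] i * ![z ^ p, z ^ q] i)
          = ![(1 : ℂ), 1] := by
        funext i; fin_cases i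
        · exact hk p
        · exact hk q
      rw [hvv, aw_diag_one]
    · rw [Matrix.det_diagonal, Fin.prod_univ_two]
      simp only [Matrix.cons_val_zero, Matrix.cons_val_one, Matrix.head_cons]
      rw [← pow_add, hz]
  -- Part 2
  have part2 : awGamma p q = {M | ∃ m : ℕ, M = awGen p q ^ m} := by
    ext M
    constructor
    · rintro ⟨z, hz, rfl⟩
      obtain ⟨m, -, rfl⟩ := hprim.eq_pow_of_pow_eq_one hz
      exact ⟨m, (hgen m).symm⟩
    · rintro ⟨m, rfl⟩
      exact ⟨ζ ^ m, by rw [← pow_mul, mul_comm, pow_mul, hζn, one_pow], hgen m⟩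
  -- injectivity of k ↦ awGen ^ k.val on ZMod n
  have hinj : Function.Injective (fun k : ZMod n => awGen p q ^ k.val) := by
    intro a b hab
    simp only [hgen] at hab
    have h0 := congrFun (congrFun hab 0) 0
    have h1 := congrFun (congrFun hab 1) 1
    simp [Matrix.diagonal] at h0 h1
    rw [← pow_mul, ← pow_mul] at h0 h1
    have hζ0 : ζ ≠ 0 := Complex.exp_ne_zero _
    have key : ∀ x y : ℕ, ζ ^ x = ζ ^ y → ((x : ZMod n)) = (y : ZMod n) := by
      intro x y hxy
      have hz1 : ζ ^ ((x : ℤ) - (y : ℤ)) = 1 := by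
        rw [zpow_sub₀ hζ0, zpow_natCast, zpow_natCast, hxy]
        exact mul_inv_cancel₀ (pow_ne_zero _ hζ0)
      have hdvd : ((n : ℤ)) ∣ (x : ℤ) - (y : ℤ) := (hprim.zpow_eq_one_iff_dvd _).mp hz1
      have h2 : (((x : ℤ) - (y : ℤ) : ℤ) : ZMod n) = 0 :=
        (ZMod.intCast_zmod_eq_zero_iff_dvd _ n).mpr hdvd
      push_cast at h2
      exact sub_eq_zero.mp h2
    have hp' : (a.val : ZMod n) * p = (b.val : ZMod n) * p := by
      have := key _ _ h0
      push_cast at this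
      exact this
    have hq' : (a.val : ZMod n) * q = (b.val : ZMod n) * q := by
      have := key _ _ h1
      push_cast at this
      exact this
    have hav : ((a.val : ZMod n)) = a := by rw [ZMod.natCast_val, ZMod.cast_id]
    have hbv : ((b.val : ZMod n)) = b := by rw [ZMod.natCast_val, ZMod.cast_id]
    obtain ⟨u, v, huv⟩ := Nat.isCoprime_iff_coprime.mpr hcop
    have hb : (u : ZMod n) * p + (v : ZMod n) * q = 1 := by
      have := congrArg (Int.cast : ℤ → ZMod n) huv
      push_cast at this
      exact this
    rw [← hav, ← hbv]
    linear_combination (u : ZMod n) * hp' + (v : ZMod n) * hq' +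
      ((b.val : ZMod n) - (a.val : ZMod n)) * hb
  -- Part 3
  have pow_mod : ∀ m : ℕ, awGen p q ^ m = awGen p q ^ (m % n) := by
    intro m
    conv_lhs => rw [← Nat.mod_add_div m n, pow_add, pow_mul]
    have h1 : awGen p q ^ n = 1 := by
      rw [hgen, hζn]
      simpa using aw_diag_one
    rw [h1, one_pow, mul_one]
  have hrange : awGamma p q = Set.range (fun k : ZMod n => awGen p q ^ k.val) := by
    rw [part2]
    ext M
    constructor
    · rintro ⟨m, rfl⟩
      exact ⟨(m : ZMod n), by simp only [ZMod.val_natCast]; exact (pow_mod m).symm⟩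
    · rintro ⟨k, rfl⟩
      exact ⟨k.val, rfl⟩
  have part3 : Nat.card (awGamma p q) = n := by
    rw [hrange, Nat.card_range_of_injective hinj, Nat.card_zmod]
  -- Part 4
  have part4 : ∀ M ∈ awGamma p q, ∀ A ∈ Matrix.specialUnitaryGroup (Fin 2) ℂ,
      M * A = A → M = 1 := by
    intro M _ A hA hMA
    have hdet : IsUnit A.det := by
      rw [(Matrix.mem_specialUnitaryGroup_iff.mp hA).2]; exact isUnit_one
    calc M = M * (A * A⁻¹) := by rw [Matrix.mul_nonsing_inv A hdet, mul_one]
      _ = (M * A) * A⁻¹ := by rw [mul_assoc]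
      _ = A * A⁻¹ := by rw [hMA]
      _ = 1 := Matrix.mul_nonsing_inv A hdet
  exact ⟨part1, part2, part3, part4⟩
end
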